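/- Let H be a complex Hilbert space, φ : H →L[ℂ] H a finite potent continuous linear operator with index at most 1 (IsCompl (LinearMap.range φ) (LinearMap.ker φ)), and X : H →L[ℂ] H a core inverse of φ. Then X = φ† (the Hilbert adjoint of φ) if and only if φ ∘ φ† ∘ φ = φ and φ is EP, i.e. LinearMap.range φ† = LinearMap.range φ. -/

import Mathlib

/-!
A core inverse of `φ` is unique as soon as `range φ ∩ ker φ = 0`, so `X = φ†` says exactly that
`φ†` is a core inverse. As `(range φ)ᗮ = ker φ†`, this holds iff `φ† φ φ† = φ†` (the adjoint of
`φ φ† φ = φ`) and `range φ† ≤ range φ`. Conversely, if `φ†` is a core inverse and `x ∈ range φ`,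
then `x - φ† (φ x)` lies in `range φ ∩ ker φ`, hence `x = φ† (φ x) ∈ range φ†`.
-/

section CoreInverse

open ContinuousLinearMap
open LinearMap (range ker mem_ker mem_range_self)

variable {𝕜 E : Type*} [RCLike 𝕜] [NormedAddCommGroup E] [InnerProductSpace 𝕜 E]

def IsCoreInverse (φ X : E →L[𝕜] E) : Prop :=
  (∀ v : E, v - φ (X v) ∈ (range (φ : E →ₗ[𝕜] E))ᗮ) ∧
    range (X : E →ₗ[𝕜] E) ≤ range (φ : E →ₗ[𝕜] E)

namespace IsCoreInverse

variable {φ X Y : E →L[𝕜] E}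

theorem comp_comp_self (hX : IsCoreInverse φ X) : φ ∘L X ∘L φ = φ := by
  ext u
  have hmem : φ u - φ (X (φ u)) ∈ range (φ : E →ₗ[𝕜] E) := sub_mem ⟨u, rfl⟩ ⟨X (φ u), rfl⟩
  have hzero := Submodule.disjoint_def.mp (Submodule.orthogonal_disjoint _) _ hmem (hX.1 (φ u))
  exact (sub_eq_zero.mp hzero).symm

theorem unique (hidx : Disjoint (range (φ : E →ₗ[𝕜] E)) (ker (φ : E →ₗ[𝕜] E)))
    (hX : IsCoreInverse φ X) (hY : IsCoreInverse φ Y) : X = Y := by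
  ext v
  have hrange : X v - Y v ∈ range (φ : E →ₗ[𝕜] E) := sub_mem (hX.2 ⟨v, rfl⟩) (hY.2 ⟨v, rfl⟩)
  have horth : φ (X v - Y v) ∈ (range (φ : E →ₗ[𝕜] E))ᗮ := by
    rw [map_sub, show φ (X v) - φ (Y v) = (v - φ (Y v)) - (v - φ (X v)) by abel]
    exact sub_mem (hY.1 v) (hX.1 v)
  have hker : φ (X v - Y v) = 0 :=
    Submodule.disjoint_def.mp (Submodule.orthogonal_disjoint _) _ (mem_range_self _ _) horth
  exact sub_eq_zero.mp (Submodule.disjoint_def.mp hidx _ hrange hker)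

end IsCoreInverse

variable [CompleteSpace E] {φ : E →L[𝕜] E}

theorem isCoreInverse_adjoint (h : φ ∘L adjoint φ ∘L φ = φ)
    (hrange : range (adjoint φ : E →ₗ[𝕜] E) ≤ range (φ : E →ₗ[𝕜] E)) :
    IsCoreInverse φ (adjoint φ) := by
  refine ⟨fun v ↦ ?_, hrange⟩
  have h' : adjoint φ ∘L φ ∘L adjoint φ = adjoint φ := by
    simpa only [adjoint_comp, adjoint_adjoint, comp_assoc] using congrArg adjoint h
  rw [← coe_coe, orthogonal_range, mem_ker, map_sub, coe_coe]
  exact sub_eq_zero.mpr (DFunLike.congr_fun h' v).symm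

theorem IsCoreInverse.range_adjoint_eq
    (hidx : Disjoint (range (φ : E →ₗ[𝕜] E)) (ker (φ : E →ₗ[𝕜] E)))
    (hφ : IsCoreInverse φ (adjoint φ)) :
    range (adjoint φ : E →ₗ[𝕜] E) = range (φ : E →ₗ[𝕜] E) := by
  refine le_antisymm hφ.2 ?_
  rintro _ ⟨u, rfl⟩
  set x := φ u
  have hrange : x - adjoint φ (φ x) ∈ range (φ : E →ₗ[𝕜] E) := sub_mem ⟨u, rfl⟩ (hφ.2 ⟨φ x, rfl⟩)
  have hker : φ (x - adjoint φ (φ x)) = 0 := by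
    rw [map_sub, sub_eq_zero]
    exact (DFunLike.congr_fun hφ.comp_comp_self x).symm
  exact ⟨φ x, (sub_eq_zero.mp (Submodule.disjoint_def.mp hidx _ hrange hker)).symm⟩

end CoreInverse

theorem core_stmt15_general {H : Type*} [NormedAddCommGroup H] [InnerProductSpace ℂ H]
    [CompleteSpace H] (φ X : H →L[ℂ] H)
    (hidx : IsCompl (LinearMap.range (φ : H →ₗ[ℂ] H)) (LinearMap.ker (φ : H →ₗ[ℂ] H)))
    (hX1 : ∀ v : H, v - φ (X v) ∈ (LinearMap.range (φ : H →ₗ[ℂ] H))ᗮ)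
    (hX2 : LinearMap.range (X : H →ₗ[ℂ] H) ≤ LinearMap.range (φ : H →ₗ[ℂ] H)) :
    X = ContinuousLinearMap.adjoint φ ↔
      (φ ∘L ContinuousLinearMap.adjoint φ ∘L φ = φ ∧
        LinearMap.range (ContinuousLinearMap.adjoint φ : H →ₗ[ℂ] H) = LinearMap.range (φ : H →ₗ[ℂ] H)) := by
  have hX : IsCoreInverse φ X := ⟨hX1, hX2⟩
  constructor
  · rintro rfl
    exact ⟨hX.comp_comp_self, hX.range_adjoint_eq hidx.disjoint⟩
  · rintro ⟨h, hrange⟩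
    exact hX.unique hidx.disjoint (isCoreInverse_adjoint h hrange.le)

theorem core_stmt15 {H : Type*} [NormedAddCommGroup H] [InnerProductSpace ℂ H]
    [CompleteSpace H] (φ X : H →L[ℂ] H)
    (hfp : ∃ n : ℕ, FiniteDimensional ℂ (LinearMap.range ((φ ^ n : H →L[ℂ] H) : H →ₗ[ℂ] H)))
    (hidx : IsCompl (LinearMap.range (φ : H →ₗ[ℂ] H)) (LinearMap.ker (φ : H →ₗ[ℂ] H)))
    (hX1 : ∀ v : H, v - φ (X v) ∈ (LinearMap.range (φ : H →ₗ[ℂ] H))ᗮ)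
    (hX2 : LinearMap.range (X : H →ₗ[ℂ] H) ≤ LinearMap.range (φ : H →ₗ[ℂ] H)) :
    X = ContinuousLinearMap.adjoint φ ↔
      (φ ∘L ContinuousLinearMap.adjoint φ ∘L φ = φ ∧
        LinearMap.range (ContinuousLinearMap.adjoint φ : H →ₗ[ℂ] H) = LinearMap.range (φ : H →ₗ[ℂ] H)) :=
  core_stmt15_general φ X hidx hX1 hX2
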